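/- arXiv:1012.2754 — 2 statements merged into one kernel-verified Lean document; each statement's English description precedes it below -/
import Mathlib

section
/- The completed Eisenstein series E*_s(z), defined for Re(s) > 1, extends meromorphically in s to all of ℂ with simple poles exactly at s = 0 and s = 1, with residues −1/2 and 1/2 respectively (for each fixed z ∈ ℍ). -/
open Real Set

/-- The completed Eisenstein series
`E*_s(z) = (1/2) π^{-s} Γ(s) Σ_{(m,n)≠0} (y/|mz+n|²)^s`, for `Re(s) > 1`. -/
noncomputable def Estar (s : ℂ) (x y : ℝ) : ℂ :=
  (1 / 2) * (Real.pi : ℂ) ^ (-s) * Complex.Gamma s *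
    ∑' p : ℤ × ℤ, if p = 0 then 0 else
      ((y : ℂ) / ((((p.1 : ℝ) * x + (p.2 : ℝ)) ^ 2 + (p.1 : ℝ) ^ 2 * y ^ 2 : ℝ) : ℂ)) ^ s

/-!
Let `Θ(t) = ∑_{(m,n)} exp(-π t |m z + n|² / y)`. Removing the term `(m,n) = 0`, the Mellin
transform of `Θ - 1` is `2 E*_s(z)` for `Re s > 1`. Poisson summation in `n` and then in `m`
gives `Θ(1/t) = t Θ(t)`, and `Θ(t) - 1` decays exponentially, so `(Θ, Θ)` is a weak FE-pair of
weight `1` with constant terms `1`. Its completed Mellin transform is `Λ₀(s) - 1/s + 1/(s - 1)`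
with `Λ₀` entire, which gives the poles and residues.
-/

open Filter Asymptotics MeasureTheory HurwitzZeta

lemma exists_pos_mul_sq_add_sq_le (x : ℝ) {u v : ℝ} (hu : 0 < u) (hv : 0 < v) :
    ∃ c > 0, ∀ a b : ℝ, c * (a ^ 2 + b ^ 2) ≤ u * a ^ 2 + v * (b + a * x) ^ 2 := by
  set K := (1 + 2 * x ^ 2) / u + 2 / v
  refine ⟨1 / K, by positivity, fun a b => ?_⟩
  have hb : b ^ 2 ≤ 2 * (b + a * x) ^ 2 + 2 * x ^ 2 * a ^ 2 := by
    nlinarith [sq_nonneg (b + 2 * a * x)]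
  have hK : a ^ 2 + b ^ 2 ≤ K * (u * a ^ 2 + v * (b + a * x) ^ 2) := by
    have e : K * (u * a ^ 2 + v * (b + a * x) ^ 2) = (1 + 2 * x ^ 2) * a ^ 2 + 2 * (b + a * x) ^ 2
        + ((1 + 2 * x ^ 2) * v / u * (b + a * x) ^ 2 + 2 * u / v * a ^ 2) := by
      simp only [K]; field_simp; ring
    rw [e]
    have hrest : 0 ≤ (1 + 2 * x ^ 2) * v / u * (b + a * x) ^ 2 + 2 * u / v * a ^ 2 := by
      positivity
    nlinarith
  rw [div_mul_eq_mul_div, one_mul, div_le_iff₀ (by positivity), mul_comm]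
  exact hK

lemma summable_exp_neg_mul_int_sq {c : ℝ} (hc : 0 < c) :
    Summable fun n : ℤ => rexp (-c * n ^ 2) := by
  refine (hasSum_int_evenKernel 0 (t := c / π) (by positivity)).summable.congr fun n => ?_
  congr 1
  field_simp
  ring

lemma summable_exp_neg_mul_sq_add_mul_sq {c d : ℝ} (hc : 0 < c) (hd : 0 < d) :
    Summable fun p : ℤ × ℤ => rexp (-(c * p.1 ^ 2 + d * p.2 ^ 2)) := by
  refine ((summable_exp_neg_mul_int_sq hc).mul_of_nonneg (summable_exp_neg_mul_int_sq hd)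
    (fun _ => (exp_pos _).le) (fun _ => (exp_pos _).le)).congr fun p => ?_
  rw [← exp_add]
  ring_nf

noncomputable def latticeTheta (x u v : ℝ) : ℝ :=
  ∑' p : ℤ × ℤ, rexp (-π * (u * p.1 ^ 2 + v * (p.2 + p.1 * x) ^ 2))

noncomputable def twistedTheta (x u v : ℝ) : ℝ :=
  ∑' p : ℤ × ℤ, Real.cos (2 * π * x * p.1 * p.2) * rexp (-π * (u * p.1 ^ 2 + v * p.2 ^ 2))

lemma twistedTheta_comm (x u v : ℝ) : twistedTheta x u v = twistedTheta x v u := by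
  rw [twistedTheta, twistedTheta, ← (Equiv.prodComm ℤ ℤ).tsum_eq]
  refine tsum_congr fun p => ?_
  simp only [Equiv.prodComm_apply, Prod.fst_swap, Prod.snd_swap]
  ring_nf

section Theta

variable (x : ℝ) {u v : ℝ}

lemma summable_latticeTheta (hu : 0 < u) (hv : 0 < v) :
    Summable fun p : ℤ × ℤ => rexp (-π * (u * p.1 ^ 2 + v * (p.2 + p.1 * x) ^ 2)) := by
  obtain ⟨c, hc, hle⟩ := exists_pos_mul_sq_add_sq_le x hu hv
  refine (summable_exp_neg_mul_sq_add_mul_sq (c := π * c) (d := π * c) (by positivity)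
    (by positivity)).of_nonneg_of_le (fun _ => (exp_pos _).le) fun p => exp_le_exp.2 ?_
  nlinarith [hle p.1 p.2, pi_pos]

lemma summable_twistedTheta (hu : 0 < u) (hv : 0 < v) :
    Summable fun p : ℤ × ℤ =>
      Real.cos (2 * π * x * p.1 * p.2) * rexp (-π * (u * p.1 ^ 2 + v * p.2 ^ 2)) := by
  refine (summable_exp_neg_mul_sq_add_mul_sq (c := π * u) (d := π * v) (by positivity)
    (by positivity)).of_norm_bounded fun p => ?_
  rw [norm_mul, norm_of_nonneg (exp_pos _).le]
  calc ‖Real.cos (2 * π * x * p.1 * p.2)‖ * rexp (-π * (u * p.1 ^ 2 + v * p.2 ^ 2))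
      ≤ 1 * rexp (-π * (u * p.1 ^ 2 + v * p.2 ^ 2)) := by
        gcongr; exact abs_cos_le_one _
    _ = _ := by rw [one_mul]; ring_nf

lemma hasSum_latticeTheta_row (hv : 0 < v) (m : ℤ) :
    HasSum (fun n : ℤ => rexp (-π * (u * m ^ 2 + v * (n + m * x) ^ 2)))
      (rexp (-π * u * m ^ 2) * evenKernel (m * x : ℝ) v) := by
  refine ((hasSum_int_evenKernel (m * x) hv).mul_left (rexp (-π * u * m ^ 2))).congr_fun
    fun n => ?_
  rw [← exp_add]
  ring_nf

lemma hasSum_twistedTheta_row (hv : 0 < v) (m : ℤ) :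
    HasSum (fun n : ℤ => Real.cos (2 * π * x * m * n) * rexp (-π * (u * m ^ 2 + v * n ^ 2)))
      (rexp (-π * u * m ^ 2) * cosKernel (m * x : ℝ) v) := by
  refine ((Complex.hasSum_re (hasSum_int_cosKernel (m * x) hv)).mul_left
    (rexp (-π * u * m ^ 2))).congr_fun fun n => ?_
  rw [Complex.re_mul_ofReal, show 2 * π * Complex.I * ((m * x : ℝ) : ℂ) * n
      = ((2 * π * x * m * n : ℝ) : ℂ) * Complex.I by push_cast; ring,
    Complex.exp_ofReal_mul_I_re, mul_left_comm, ← exp_add]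
  ring_nf

lemma latticeTheta_eq_twistedTheta (hu : 0 < u) (hv : 0 < v) :
    latticeTheta x u v = 1 / v ^ (1 / 2 : ℝ) * twistedTheta x u (1 / v) := by
  have hrows := (summable_latticeTheta x hu hv).hasSum.prod_fiberwise
    (hasSum_latticeTheta_row x hv)
  have htwisted := (summable_twistedTheta x hu (one_div_pos.2 hv)).hasSum.prod_fiberwise
    (hasSum_twistedTheta_row x (one_div_pos.2 hv))
  refine hrows.unique ((htwisted.mul_left (1 / v ^ (1 / 2 : ℝ))).congr_fun fun m => ?_)
  rw [evenKernel_functional_equation]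
  ring

/-- The twisted series is symmetric in `(m, n)`, so Poisson summation can be applied to the rows
and then to the columns. -/
lemma latticeTheta_inversion (hu : 0 < u) (hv : 0 < v) :
    latticeTheta x u v = 1 / (u * v) ^ (1 / 2 : ℝ) * latticeTheta x (1 / v) (1 / u) := by
  rw [latticeTheta_eq_twistedTheta x hu hv, twistedTheta_comm,
    latticeTheta_eq_twistedTheta x (one_div_pos.2 hv) (one_div_pos.2 hu), one_div_one_div,
    mul_rpow hu.le hv.le, div_rpow zero_le_one hu.le, one_rpow]
  field_simp

end Theta

/-- `|m z + n|² / Im z` for `z = x + i y` and `p = (m, n)`. -/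
noncomputable def eisensteinForm (x y : ℝ) (p : ℤ × ℤ) : ℝ :=
  (((p.1 : ℝ) * x + p.2) ^ 2 + (p.1 : ℝ) ^ 2 * y ^ 2) / y

noncomputable def eisensteinTheta (x y t : ℝ) : ℝ :=
  ∑' p : ℤ × ℤ, rexp (-π * eisensteinForm x y p * t)

lemma one_le_sq_add_sq_of_ne_zero {p : ℤ × ℤ} (hp : p ≠ 0) :
    1 ≤ (p.1 : ℝ) ^ 2 + (p.2 : ℝ) ^ 2 := by
  have h : p.1 ≠ 0 ∨ p.2 ≠ 0 := by
    contrapose! hp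
    exact Prod.ext hp.1 hp.2
  have h1 : (1 : ℤ) ≤ p.1 ^ 2 + p.2 ^ 2 := by
    rcases h with h | h <;>
      nlinarith [Int.one_le_abs h, sq_abs p.1, sq_abs p.2, sq_nonneg p.1, sq_nonneg p.2]
  exact_mod_cast h1

lemma summable_sq_add_sq_rpow_neg {σ : ℝ} (hσ : 1 < σ) :
    Summable fun p : ℤ × ℤ => ((p.1 : ℝ) ^ 2 + (p.2 : ℝ) ^ 2) ^ (-σ) := by
  have hnorm := ((finTwoArrowEquiv ℤ).symm.summable_iff).2
    (EisensteinSeries.summable_one_div_norm_rpow (k := 2 * σ) (by linarith))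
  refine hnorm.of_nonneg_of_le (fun _ => by positivity) fun p => ?_
  by_cases hp : p = 0
  · simp only [hp, Prod.fst_zero, Prod.snd_zero, Int.cast_zero]
    rw [zero_pow two_ne_zero, add_zero, zero_rpow (by linarith)]
    exact rpow_nonneg (norm_nonneg _) _
  set N := ‖(finTwoArrowEquiv ℤ).symm p‖
  have hN : N = max |(p.1 : ℝ)| |(p.2 : ℝ)| := by
    simp [N, EisensteinSeries.norm_eq_max_natAbs, finTwoArrowEquiv, Nat.cast_natAbs]
  have hNpos : 0 < N := norm_pos_iff.2 fun h =>
    hp (by simpa using congrArg (finTwoArrowEquiv ℤ) h : p = (0, 0))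
  have hN2 : N ^ 2 ≤ (p.1 : ℝ) ^ 2 + (p.2 : ℝ) ^ 2 := by
    rcases max_choice |(p.1 : ℝ)| |(p.2 : ℝ)| with h | h <;> rw [hN, h, sq_abs] <;>
      nlinarith [sq_nonneg (p.1 : ℝ), sq_nonneg (p.2 : ℝ)]
  calc ((p.1 : ℝ) ^ 2 + (p.2 : ℝ) ^ 2) ^ (-σ) ≤ (N ^ 2) ^ (-σ) :=
        rpow_le_rpow_of_nonpos (by positivity) hN2 (by linarith)
    _ = N ^ (-(2 * σ)) := by
        rw [← rpow_natCast, ← rpow_mul hNpos.le]; norm_num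

section Eisenstein

variable (x : ℝ) {y : ℝ}

lemma eisensteinForm_nonneg (hy : 0 < y) (p : ℤ × ℤ) : 0 ≤ eisensteinForm x y p := by
  unfold eisensteinForm
  positivity

lemma eisensteinForm_mul (hy : 0 < y) (t : ℝ) (p : ℤ × ℤ) :
    eisensteinForm x y p * t = t * y * p.1 ^ 2 + t / y * (p.2 + p.1 * x) ^ 2 := by
  unfold eisensteinForm
  field_simp
  ring

lemma exists_pos_le_eisensteinForm (hy : 0 < y) :
    ∃ c > 0, ∀ p, c * ((p.1 : ℝ) ^ 2 + (p.2 : ℝ) ^ 2) ≤ eisensteinForm x y p := by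
  obtain ⟨c, hc, hle⟩ := exists_pos_mul_sq_add_sq_le x hy (one_div_pos.2 hy)
  refine ⟨c, hc, fun p => ?_⟩
  rw [← mul_one (eisensteinForm x y p), eisensteinForm_mul x hy]
  simpa using hle p.1 p.2

lemma eisensteinForm_pos (hy : 0 < y) {p : ℤ × ℤ} (hp : p ≠ 0) :
    0 < eisensteinForm x y p := by
  obtain ⟨c, hc, hle⟩ := exists_pos_le_eisensteinForm x hy
  nlinarith [hle p, one_le_sq_add_sq_of_ne_zero hp]

lemma eisensteinTheta_eq_latticeTheta (hy : 0 < y) (t : ℝ) :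
    eisensteinTheta x y t = latticeTheta x (t * y) (t / y) := by
  refine tsum_congr fun p => ?_
  rw [mul_assoc, eisensteinForm_mul x hy]

lemma summable_eisensteinTheta (hy : 0 < y) {t : ℝ} (ht : 0 < t) :
    Summable fun p : ℤ × ℤ => rexp (-π * eisensteinForm x y p * t) := by
  refine (summable_latticeTheta x (mul_pos ht hy) (div_pos ht hy)).congr fun p => ?_
  rw [mul_assoc (-π), eisensteinForm_mul x hy]

lemma eisensteinTheta_one_div (hy : 0 < y) {t : ℝ} (ht : 0 < t) :
    eisensteinTheta x y (1 / t) = t * eisensteinTheta x y t := by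
  rw [eisensteinTheta_eq_latticeTheta x hy, eisensteinTheta_eq_latticeTheta x hy,
    latticeTheta_inversion x (mul_pos ht hy) (div_pos ht hy),
    show t * y * (t / y) = t ^ 2 by field_simp, ← sqrt_eq_rpow, sqrt_sq ht.le]
  field_simp

lemma continuousOn_eisensteinTheta (hy : 0 < y) :
    ContinuousOn (eisensteinTheta x y) (Ioi 0) := by
  intro t₀ ht₀
  have ht₀' : 0 < t₀ / 2 := half_pos ht₀
  have hcont : ContinuousOn (eisensteinTheta x y) (Ici (t₀ / 2)) := by
    refine continuousOn_tsum (fun p => by fun_prop) (summable_eisensteinTheta x hy ht₀')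
      fun p t ht => ?_
    rw [norm_of_nonneg (exp_pos _).le, exp_le_exp]
    have hQ : 0 ≤ π * eisensteinForm x y p :=
      mul_nonneg pi_pos.le (eisensteinForm_nonneg x hy p)
    nlinarith [mul_le_mul_of_nonneg_left (mem_Ici.1 ht) hQ]
  exact (hcont.continuousAt (Ici_mem_nhds (by linarith [mem_Ioi.1 ht₀]))).continuousWithinAt

lemma hasSum_eisensteinTheta_sub_one (hy : 0 < y) {t : ℝ} (ht : 0 < t) :
    HasSum (fun p : ℤ × ℤ => if p = 0 then 0 else rexp (-π * eisensteinForm x y p * t))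
      (eisensteinTheta x y t - 1) := by
  have h := hasSum_ite_sub_hasSum (summable_eisensteinTheta x hy ht).hasSum (0 : ℤ × ℤ)
  rwa [show eisensteinForm x y 0 = 0 by simp [eisensteinForm], mul_zero, zero_mul, exp_zero]
    at h

lemma isBigO_eisensteinTheta_sub_one (hy : 0 < y) :
    ∃ c > 0, (fun t => eisensteinTheta x y t - 1) =O[atTop] fun t => rexp (-c * t) := by
  obtain ⟨c, hc, hle⟩ := exists_pos_le_eisensteinForm x hy
  refine ⟨π * c, by positivity,
    IsBigO.of_bound (rexp (π * c) * (eisensteinTheta x y 1 - 1)) ?_⟩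
  filter_upwards [eventually_ge_atTop 1] with t ht
  have hsum := hasSum_eisensteinTheta_sub_one x hy (by linarith : 0 < t)
  have hbound := (hasSum_eisensteinTheta_sub_one x hy one_pos).mul_left
    (rexp (π * c) * rexp (-(π * c) * t))
  rw [norm_of_nonneg (hsum.nonneg fun p => by split_ifs <;> positivity),
    norm_of_nonneg (exp_pos _).le]
  calc eisensteinTheta x y t - 1
      ≤ rexp (π * c) * rexp (-(π * c) * t) * (eisensteinTheta x y 1 - 1) :=
        hasSum_le (fun p => ?_) hsum hbound
    _ = _ := by ring
  split_ifs with hp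
  · simp
  rw [← exp_add, ← exp_add, exp_le_exp]
  have hQ : c ≤ eisensteinForm x y p := by nlinarith [hle p, one_le_sq_add_sq_of_ne_zero hp]
  nlinarith [mul_le_mul_of_nonneg_right hQ (by linarith : (0 : ℝ) ≤ t - 1), pi_pos]

lemma hasSum_mellin_eisensteinTheta (hy : 0 < y) {s : ℂ} (hs : 1 < s.re) :
    HasSum (fun p : ℤ × ℤ =>
        π ^ (-s) * Complex.Gamma s * (if p = 0 then 0 else 1) / (eisensteinForm x y p : ℂ) ^ s)
      (mellin (fun t => (eisensteinTheta x y t : ℂ) - 1) s) := by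
  refine hasSum_mellin_pi_mul (fun p => ?_) (by linarith) (fun t ht => ?_) ?_
  · by_cases hp : p = 0
    · exact Or.inl (if_pos hp)
    · exact Or.inr (eisensteinForm_pos x hy hp)
  · convert Complex.hasSum_ofReal.2 (hasSum_eisensteinTheta_sub_one x hy ht) using 1
    · ext p; split_ifs <;> simp
    · push_cast; rfl
  · obtain ⟨c, hc, hle⟩ := exists_pos_le_eisensteinForm x hy
    refine ((summable_sq_add_sq_rpow_neg hs).mul_left (c ^ (-s.re))).of_nonneg_of_le
      (fun p => div_nonneg (norm_nonneg _) (rpow_nonneg (eisensteinForm_nonneg x hy p) _))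
      fun p => ?_
    split_ifs with hp
    · simp only [norm_zero, zero_div]
      positivity
    · rw [norm_one, ← mul_rpow hc.le (by positivity), rpow_neg (by positivity), ← one_div]
      have hpos : 0 < c * ((p.1 : ℝ) ^ 2 + (p.2 : ℝ) ^ 2) :=
        mul_pos hc (by linarith [one_le_sq_add_sq_of_ne_zero hp])
      exact one_div_le_one_div_of_le (rpow_pos_of_pos hpos _)
        (rpow_le_rpow hpos.le (hle p) (by linarith))

lemma locallyIntegrableOn_eisensteinTheta (hy : 0 < y) :
    LocallyIntegrableOn (fun t => (eisensteinTheta x y t : ℂ)) (Ioi 0) :=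
  (Complex.continuous_ofReal.comp_continuousOn
    (continuousOn_eisensteinTheta x hy)).locallyIntegrableOn measurableSet_Ioi

lemma isBigO_rpow_eisensteinTheta_sub_one (hy : 0 < y) (r : ℝ) :
    (fun t => (eisensteinTheta x y t : ℂ) - 1) =O[atTop] (· ^ r) := by
  obtain ⟨c, hc, h⟩ := isBigO_eisensteinTheta_sub_one x hy
  simpa using
    Complex.isBigO_ofReal_left.2 (h.trans (isLittleO_exp_neg_mul_rpow_atTop hc r).isBigO)

noncomputable def eisensteinFEPair (hy : 0 < y) : WeakFEPair ℂ where
  f t := eisensteinTheta x y t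
  g t := eisensteinTheta x y t
  k := 1
  ε := 1
  f₀ := 1
  g₀ := 1
  hf_int := locallyIntegrableOn_eisensteinTheta x hy
  hg_int := locallyIntegrableOn_eisensteinTheta x hy
  hk := one_pos
  hε := one_ne_zero
  h_feq t ht := by
    simp only [eisensteinTheta_one_div x hy ht, Complex.ofReal_mul, rpow_one, one_mul,
      smul_eq_mul]
  hf_top := isBigO_rpow_eisensteinTheta_sub_one x hy
  hg_top := isBigO_rpow_eisensteinTheta_sub_one x hy

lemma div_cpow_eq_one_div_eisensteinForm_cpow (hy : 0 < y) {p : ℤ × ℤ} (hp : p ≠ 0)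
    (s : ℂ) :
    ((y : ℂ) / ((((p.1 : ℝ) * x + (p.2 : ℝ)) ^ 2 + (p.1 : ℝ) ^ 2 * y ^ 2 : ℝ) : ℂ)) ^ s
      = 1 / (eisensteinForm x y p : ℂ) ^ s := by
  have hQ := eisensteinForm_pos x hy hp
  rw [← Complex.ofReal_div, show y / (((p.1 : ℝ) * x + p.2) ^ 2 + (p.1 : ℝ) ^ 2 * y ^ 2)
      = (eisensteinForm x y p)⁻¹ by rw [eisensteinForm, inv_div],
    Complex.ofReal_inv, one_div, Complex.inv_cpow]
  simp [Complex.arg_ofReal_of_nonneg hQ.le, pi_ne_zero.symm]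

lemma Estar_eq_mellin (hy : 0 < y) {s : ℂ} (hs : 1 < s.re) :
    Estar s x y = 1 / 2 * mellin (fun t => (eisensteinTheta x y t : ℂ) - 1) s := by
  rw [Estar, ← (hasSum_mellin_eisensteinTheta x hy hs).tsum_eq, ← tsum_mul_left,
    ← tsum_mul_left]
  refine tsum_congr fun p => ?_
  split_ifs with hp
  · simp
  · rw [div_cpow_eq_one_div_eisensteinForm_cpow x hy hp]
    ring

end Eisenstein

/-- For each fixed `z ∈ ℍ`, `s ↦ E*_s(z)` extends meromorphically to `ℂ` with simple
poles exactly at `s = 0` and `s = 1`, of residues `−1/2` and `1/2` respectively. -/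
theorem Estar_meromorphic_continuation (x y : ℝ) (hy : 0 < y) :
    ∃ F G : ℂ → ℂ,
      (∀ s : ℂ, 1 < s.re → F s = Estar s x y) ∧
      AnalyticOnNhd ℂ G Set.univ ∧
      (∀ s : ℂ, s ≠ 0 → s ≠ 1 → F s = G s + (-(1 / 2)) / s + (1 / 2) / (s - 1)) := by
  set P := eisensteinFEPair x hy
  refine ⟨fun s => 1 / 2 * P.Λ s, fun s => 1 / 2 * P.Λ₀ s, fun s hs => ?_, ?_,
    fun s hs₀ hs₁ => ?_⟩
  · rw [Estar_eq_mellin x hy hs]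
    exact congrArg (1 / 2 * ·) (P.hasMellin (s := s) hs).2.symm
  · exact (P.differentiable_Λ₀.const_mul _).differentiableOn.analyticOnNhd isOpen_univ
  · have h₁ : s - 1 ≠ 0 := sub_ne_zero.2 hs₁
    have h₁' : (1 : ℂ) - s ≠ 0 := sub_ne_zero.2 (Ne.symm hs₁)
    simp only [WeakFEPair.Λ, P, eisensteinFEPair, smul_eq_mul, mul_one, Complex.ofReal_one]
    field_simp
    ring
end

section
/- Let z = x + iy with y > 0, and for (m,n) ∈ ℤ² put Q_z(m,n) = |mz+n|²/y = ((mx+n)² + m²y²)/y. For t > 0, writing Θ_t(z) = Σ_{(m,n)∈ℤ²\{0}} e^{-πtQ_z(m,n)}, Poisson summation in both lattice variables gives Θ_t(z) + 1 = Σ_{(m,n)∈ℤ²} e^{-πtQ_z(m,n)} = (1/t) Σ_{(m,n)∈ℤ²} e^{-(π/t)Q_z(m,n)}. -/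
open Real
open Complex

lemma aux_summable_exp_neg_sq {δ : ℝ} (hδ : 0 < δ) :
    Summable fun n : ℤ => rexp (-δ * (n : ℝ) ^ 2) := by
  have h : Summable fun n : ℤ => jacobiTheta₂_term n 0 (δ / π * I) := by
    rw [summable_jacobiTheta₂_term_iff]
    simp [Complex.mul_I_im, Real.pi_pos, hδ, div_pos]
  rw [← Complex.summable_ofReal]
  convert h using 2 with n
  rw [jacobiTheta₂_term, Complex.ofReal_exp]
  congr 1
  push_cast
  have hπ : (π : ℂ) ≠ 0 := by
    simpa using Real.pi_ne_zero
  field_simp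
  ring_nf
  rw [Complex.I_sq]
  ring

lemma aux_gauss {s : ℝ} (hs : 0 < s) (r : ℝ) :
    (∑' m : ℤ, cexp (-(π : ℂ) * s * (m : ℂ) ^ 2 - 2 * π * I * r * m)) =
      (1 / (Real.sqrt s : ℂ)) * ∑' m : ℤ, cexp (-(π : ℂ) / s * ((m : ℂ) + r) ^ 2) := by
  have h := Complex.tsum_exp_neg_quadratic (a := (s : ℂ))
    (by simpa using hs) (-I * r)
  have h1 : ∀ m : ℤ, -(π : ℂ) * s * m ^ 2 + 2 * π * (-I * r) * m
      = -(π : ℂ) * s * m ^ 2 - 2 * π * I * r * m := by intro m; ring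
  have h2 : ∀ m : ℤ, -(π : ℂ) / s * ((m : ℂ) + I * (-I * r)) ^ 2
      = -(π : ℂ) / s * ((m : ℂ) + r) ^ 2 := by
    intro m
    congr 2
    rw [neg_mul, mul_neg, ← mul_assoc, Complex.I_mul_I]
    ring
  have h3 : ((s : ℂ)) ^ (1 / 2 : ℂ) = (Real.sqrt s : ℂ) := by
    rw [Real.sqrt_eq_rpow, Complex.ofReal_cpow hs.le]
    norm_num
  simp_rw [h1, h2, h3] at h
  exact h

lemma aux_summable2 (x y : ℝ) (hy : 0 < y) {s : ℝ} (hs : 0 < s) :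
    Summable fun p : ℤ × ℤ =>
      rexp (-π * s * (((p.1 : ℝ) * x + (p.2 : ℝ)) ^ 2 + (p.1 : ℝ) ^ 2 * y ^ 2) / y) := by
  set C : ℝ := max 2 ((1 + 2 * x ^ 2) / y ^ 2) with hC
  have hC2 : (2 : ℝ) ≤ C := le_max_left _ _
  have hCx : (1 + 2 * x ^ 2) / y ^ 2 ≤ C := le_max_right _ _
  have hC0 : 0 < C := lt_of_lt_of_le two_pos hC2
  have hCx' : 1 + 2 * x ^ 2 ≤ C * y ^ 2 := by
    rw [div_le_iff₀ (by positivity)] at hCx; linarith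
  set δ : ℝ := π * s / (y * C) with hδdef
  have hδ : 0 < δ := by positivity
  have key : ∀ m n : ℝ, m ^ 2 + n ^ 2 ≤ C * ((m * x + n) ^ 2 + m ^ 2 * y ^ 2) := by
    intro m n
    nlinarith [sq_nonneg (m * x + n + m * x), sq_nonneg (m * x + n), sq_nonneg m,
      mul_nonneg (sq_nonneg m) (sub_nonneg.mpr hCx')]
  have hbound : ∀ p : ℤ × ℤ,
      rexp (-π * s * (((p.1 : ℝ) * x + (p.2 : ℝ)) ^ 2 + (p.1 : ℝ) ^ 2 * y ^ 2) / y)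
        ≤ rexp (-δ * (p.1 : ℝ) ^ 2) * rexp (-δ * (p.2 : ℝ) ^ 2) := by
    intro p
    rw [← Real.exp_add, Real.exp_le_exp]
    have hk := key (p.1 : ℝ) (p.2 : ℝ)
    have hps : (0 : ℝ) < π * s := by positivity
    have hk2 := mul_le_mul_of_nonneg_left hk hps.le
    have h1 : -δ * (p.1 : ℝ) ^ 2 + -δ * (p.2 : ℝ) ^ 2
        = -((π * s * ((p.1 : ℝ) ^ 2 + (p.2 : ℝ) ^ 2)) / (y * C)) := by
      rw [hδdef]; ring
    have h2 : -π * s * (((p.1 : ℝ) * x + (p.2 : ℝ)) ^ 2 + (p.1 : ℝ) ^ 2 * y ^ 2) / y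
        = -((π * s * (C * (((p.1 : ℝ) * x + (p.2 : ℝ)) ^ 2 + (p.1 : ℝ) ^ 2 * y ^ 2))) / (y * C)) := by
      field_simp
    rw [h1, h2, neg_le_neg_iff, div_le_div_iff_of_pos_right (by positivity)]
    exact hk2
  refine Summable.of_nonneg_of_le (fun p => (Real.exp_pos _).le) hbound ?_
  exact (aux_summable_exp_neg_sq hδ).mul_of_nonneg (aux_summable_exp_neg_sq hδ)
    (fun _ => (Real.exp_pos _).le) (fun _ => (Real.exp_pos _).le)

lemma aux_gauss' {s : ℝ} (hs : 0 < s) (r : ℝ) :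
    (∑' m : ℤ, cexp (-(π : ℂ) / s * ((m : ℂ) + r) ^ 2)) =
      (Real.sqrt s : ℂ) * ∑' m : ℤ, cexp (-(π : ℂ) * s * (m : ℂ) ^ 2 - 2 * π * I * r * m) := by
  rw [aux_gauss hs r, ← mul_assoc]
  have h : (Real.sqrt s : ℂ) ≠ 0 := by
    simpa using (Real.sqrt_ne_zero'.mpr hs)
  field_simp


/-- Two-dimensional theta transformation for the unimodular positive-definite form
`Q_z(m,n) = ((mx+n)² + m²y²)/y`:
`Σ_{(m,n)∈ℤ²} e^{-πtQ_z(m,n)} = (1/t) Σ_{(m,n)∈ℤ²} e^{-(π/t)Q_z(m,n)}`. -/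
theorem theta_transformation (x y : ℝ) (hy : 0 < y) (t : ℝ) (ht : 0 < t) :
    (∑' p : ℤ × ℤ, Real.exp
      (-Real.pi * t * (((p.1 : ℝ) * x + (p.2 : ℝ)) ^ 2 + (p.1 : ℝ) ^ 2 * y ^ 2) / y)) =
    (1 / t) * ∑' p : ℤ × ℤ, Real.exp
      (-(Real.pi / t) * (((p.1 : ℝ) * x + (p.2 : ℝ)) ^ 2 + (p.1 : ℝ) ^ 2 * y ^ 2) / y) := by
  have hy' : y ≠ 0 := hy.ne'
  have ht' : t ≠ 0 := ht.ne'
  have hyc : (y : ℂ) ≠ 0 := by exact_mod_cast hy'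
  have htc : (t : ℂ) ≠ 0 := by exact_mod_cast ht'
  have hS1 : Summable fun p : ℤ × ℤ =>
      rexp (-π * t * (((p.1 : ℝ) * x + (p.2 : ℝ)) ^ 2 + (p.1 : ℝ) ^ 2 * y ^ 2) / y) :=
    aux_summable2 x y hy ht
  have hS2 : Summable fun p : ℤ × ℤ =>
      rexp (-(π / t) * (((p.1 : ℝ) * x + (p.2 : ℝ)) ^ 2 + (p.1 : ℝ) ^ 2 * y ^ 2) / y) := by
    have := aux_summable2 x y hy (show (0:ℝ) < 1/t by positivity)
    apply this.congr
    intro p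
    congr 1
    ring
  have hS1c : Summable fun p : ℤ × ℤ =>
      cexp ((-π * t * (((p.1 : ℝ) * x + (p.2 : ℝ)) ^ 2 + (p.1 : ℝ) ^ 2 * y ^ 2) / y : ℝ)) := by
    simpa only [Complex.ofReal_exp] using Complex.summable_ofReal.mpr hS1
  have hS2c : Summable fun p : ℤ × ℤ =>
      cexp ((-(π / t) * (((p.1 : ℝ) * x + (p.2 : ℝ)) ^ 2 + (p.1 : ℝ) ^ 2 * y ^ 2) / y : ℝ)) := by
    simpa only [Complex.ofReal_exp] using Complex.summable_ofReal.mpr hS2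
  -- pass to ℂ
  rw [← Complex.ofReal_inj, Complex.ofReal_tsum, Complex.ofReal_mul, Complex.ofReal_tsum]
  simp only [Complex.ofReal_exp]
  -- the double-sum kernel after one Poisson summation
  set F : ℤ → ℤ → ℂ := fun m n => cexp ((-π * (t * y) * (m : ℝ) ^ 2 : ℝ)) *
      (cexp ((-π * (y / t) * (n : ℝ) ^ 2 : ℝ)) *
        cexp ((-2 * π * x * (m : ℝ) * (n : ℝ) : ℝ) * I)) with hF
  have hFsummable : Summable (Function.uncurry F) := by
    apply Summable.of_norm
    have h0 : ∀ b : ℝ, ((b : ℂ) * I).re = 0 := by intro b; simp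
    have hnorm : ∀ p : ℤ × ℤ, ‖Function.uncurry F p‖
        = rexp (-(π * (t * y)) * (p.1 : ℝ) ^ 2) * rexp (-(π * (y / t)) * (p.2 : ℝ) ^ 2) := by
      intro p
      simp only [Function.uncurry, hF, norm_mul, Complex.norm_exp,
        Complex.ofReal_re, h0, Real.exp_zero, mul_one]
      ring_nf
    exact Summable.congr ((aux_summable_exp_neg_sq (show (0:ℝ) < π*(t*y) by positivity)).mul_of_nonneg
      (aux_summable_exp_neg_sq (show (0:ℝ) < π*(y/t) by positivity))
      (fun _ => (Real.exp_pos _).le) (fun _ => (Real.exp_pos _).le))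
      (fun p => (hnorm p).symm)
  have hcoef : (Real.sqrt (y / t) : ℂ) * (1 / (Real.sqrt (t * y) : ℂ)) = ((1 / t : ℝ) : ℂ) := by
    have ha : Real.sqrt (y / t) * Real.sqrt (t * y) = y := by
      rw [← Real.sqrt_mul (by positivity), show (y / t) * (t * y) = y ^ 2 by field_simp,
        Real.sqrt_sq hy.le]
    have hb : Real.sqrt (t * y) ≠ 0 := by positivity
    have hr : Real.sqrt (y / t) * (1 / Real.sqrt (t * y)) = 1 / t := by
      have hb2 : Real.sqrt (t * y) * Real.sqrt (t * y) = t * y :=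
        Real.mul_self_sqrt (by positivity)
      have hyq : Real.sqrt (y / t) = y / Real.sqrt (t * y) := by
        rw [eq_div_iff hb]; exact ha
      rw [hyq, div_mul_div_comm, hb2, mul_one, mul_comm t y, ← div_div, div_self hy']
    rw [← hr]
    push_cast
    ring
  calc (∑' p : ℤ × ℤ, cexp ((-π * t * (((p.1 : ℝ) * x + (p.2 : ℝ)) ^ 2 + (p.1 : ℝ) ^ 2 * y ^ 2) / y : ℝ)))
      = ∑' m : ℤ, ∑' n : ℤ, cexp ((-π * t * (((m : ℝ) * x + (n : ℝ)) ^ 2 + (m : ℝ) ^ 2 * y ^ 2) / y : ℝ)) :=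
        hS1c.tsum_prod
    _ = ∑' m : ℤ, cexp ((-π * (t * y) * (m : ℝ) ^ 2 : ℝ)) *
          ∑' n : ℤ, cexp (-(π : ℂ) / ((y / t : ℝ) : ℂ) * ((n : ℂ) + (((m : ℝ) * x : ℝ) : ℂ)) ^ 2) := by
        refine tsum_congr fun m => ?_
        rw [← tsum_mul_left]
        refine tsum_congr fun n => ?_
        rw [← Complex.exp_add]
        congr 1
        push_cast
        field_simp
        ring
    _ = (Real.sqrt (y / t) : ℂ) * ∑' m : ℤ, ∑' n : ℤ, F m n := by
        rw [← tsum_mul_left]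
        refine tsum_congr fun m => ?_
        rw [aux_gauss' (show (0:ℝ) < y/t by positivity) ((m : ℝ) * x), mul_left_comm]
        congr 1
        rw [← tsum_mul_left]
        refine tsum_congr fun n => ?_
        congr 1
        rw [← Complex.exp_add]
        congr 1
        push_cast
        ring
    _ = (Real.sqrt (y / t) : ℂ) * ∑' n : ℤ, ∑' m : ℤ, F m n := by
        rw [hFsummable.tsum_comm]
    _ = (Real.sqrt (y / t) : ℂ) * ∑' n : ℤ, cexp ((-π * (y / t) * (n : ℝ) ^ 2 : ℝ)) *
          ((1 / (Real.sqrt (t * y) : ℂ)) *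
            ∑' m : ℤ, cexp (-(π : ℂ) / ((t * y : ℝ) : ℂ) * ((m : ℂ) + (((n : ℝ) * x : ℝ) : ℂ)) ^ 2)) := by
        congr 1
        refine tsum_congr fun n => ?_
        rw [← aux_gauss (mul_pos ht hy) ((n : ℝ) * x), ← tsum_mul_left]
        refine tsum_congr fun m => ?_
        rw [hF]
        simp only []
        rw [mul_left_comm]
        congr 1
        rw [← Complex.exp_add]
        congr 1
        push_cast
        ring
    _ = ((1 / t : ℝ) : ℂ) * ∑' p : ℤ × ℤ,
          cexp ((-(π / t) * (((p.1 : ℝ) * x + (p.2 : ℝ)) ^ 2 + (p.1 : ℝ) ^ 2 * y ^ 2) / y : ℝ)) := by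
        rw [hS2c.tsum_prod]
        simp_rw [mul_left_comm _ ((1 / (Real.sqrt (t * y) : ℂ))) _]
        rw [tsum_mul_left, ← mul_assoc, hcoef]
        congr 1
        refine tsum_congr fun n => ?_
        rw [← tsum_mul_left]
        refine tsum_congr fun m => ?_
        rw [← Complex.exp_add]
        congr 1
        push_cast
        field_simp
        ring
end
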